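/- Let n, k be positive integers and let x₁, …, x_n be commuting indeterminates. Let Θ(ℤ/nℤ) := det((x_{\overline{i−j}})_{1≤i,j≤n}) denote the group determinant of the cyclic group ℤ/nℤ, i.e. the determinant of the n×n circulant-type matrix whose (i,j) entry is x_b where 1 ≤ b ≤ n and b ≡ i − j (mod n). Then Θ(ℤ/nℤ)^k = Σ_{λ ∈ Λ_n^k} m_λ(ζ_{(n,k)}) · x_{λ₁} x_{λ₂} ⋯ x_{λ_{kn}}, and moreover all terms with |λ| ≢ 0 (mod n) have coefficient zero, so the sum may be restricted to λ ∈ Λ_n^k with |λ| ≡ 0 (mod n). -/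

import Mathlib

/-- `zetaC n` is the primitive `n`-th root of unity `exp(2π√-1/n)`. -/
noncomputable def zetaC (n : ℕ) : ℂ := Complex.exp (2 * Real.pi * Complex.I / n)

/-- `mval n N lam` is the special value `m_λ(ζ_{(n,k)})` of the monomial symmetric
polynomial attached to `λ ∈ ℤ^N` (with `N = k*n`), i.e.
`(∏_{i∈ℤ} λ[i]!)⁻¹ · Σ_{σ∈S_N} ∏_{j=1}^{N} ζ_n^{(j-1)·λ_{σ⁻¹(j)}}`. -/
noncomputable def mval (n N : ℕ) (lam : Fin N → ℤ) : ℂ :=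
  (∏ i ∈ Finset.univ.image lam,
      ((Nat.factorial ((Finset.univ.filter fun j => lam j = i).card) : ℂ)))⁻¹ *
    ∑ σ : Equiv.Perm (Fin N), ∏ j : Fin N, zetaC n ^ (((j : ℕ) : ℤ) * lam (σ⁻¹ j))

/-- The group determinant matrix of `ℤ/nℤ`: the variables `x₁, …, x_n` are encoded as
`X 0, …, X (n-1)` (`x_b ↔ X (b-1)`), and the `(i,j)` entry is `x_b` with
`b ≡ i - j (mod n)`, i.e. `X (i - j - 1)` in `Fin n` (modular) arithmetic. -/
noncomputable def circ (n : ℕ) (hn : 0 < n) :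
    Matrix (Fin n) (Fin n) (MvPolynomial (Fin n) ℂ) :=
  Matrix.of fun i j => MvPolynomial.X (i - j - ⟨1 % n, Nat.mod_lt 1 hn⟩)

lemma zetaC_prim (n : ℕ) (hn : 0 < n) : IsPrimitiveRoot (zetaC n) n :=
  Complex.isPrimitiveRoot_exp n hn.ne'
lemma zetaC_pow_n (n : ℕ) (hn : 0 < n) : zetaC n ^ n = 1 := (zetaC_prim n hn).pow_eq_one
lemma zetaC_ne_zero (n : ℕ) : zetaC n ≠ 0 := Complex.exp_ne_zero _
lemma zetaC_pow_mod (n : ℕ) (hn : 0 < n) (a : ℕ) : zetaC n ^ (a % n) = zetaC n ^ a := by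
  conv_rhs => rw [← Nat.div_add_mod a n]
  rw [pow_add, pow_mul, zetaC_pow_n n hn, one_pow, one_mul]
lemma zetaC_zpow_congr (n : ℕ) (hn : 0 < n) {a b : ℤ} (h : (n : ℤ) ∣ (a - b)) :
    zetaC n ^ a = zetaC n ^ b := by
  obtain ⟨q, hq⟩ := h
  have ha : a = b + n * q := by linarith
  rw [ha, zpow_add₀ (zetaC_ne_zero n), zpow_mul, zpow_natCast, zetaC_pow_n n hn, one_zpow, mul_one]
lemma zetaC_pow_congr (n : ℕ) (hn : 0 < n) {a b : ℕ} (h : a % n = b % n) :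
    zetaC n ^ a = zetaC n ^ b := by
  rw [← zetaC_pow_mod n hn a, h, zetaC_pow_mod n hn b]
open MvPolynomial in
lemma det_circ (n : ℕ) (hn : 0 < n) :
    (circ n hn).det = ∏ t : Fin n, ∑ a : Fin n,
      C (zetaC n ^ ((t : ℕ) * ((a : ℕ) + 1))) * X a := by
  classical
  have hNZ : NeZero n := ⟨hn.ne'⟩
  set z := zetaC n with hz
  set E : Fin n → ℂ := fun m => z ^ (m : ℕ) with hE
  have E_mul : ∀ a b : Fin n, E (a + b) = E a * E b := by
    intro a b
    simp only [hE]
    rw [← pow_add]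
    exact zetaC_pow_congr n hn (by simp [Fin.val_add, Nat.mod_mod_of_dvd])
  have E_inj : Function.Injective E := by
    intro a b hab
    exact Fin.ext ((zetaC_prim n hn).pow_inj a.isLt b.isLt hab)
  set v : Fin n → ℂ := fun i => E (-i) with hv
  have v_inj : Function.Injective v := fun a b h => neg_injective (E_inj h)
  set L : Fin n → MvPolynomial (Fin n) ℂ :=
    fun t => ∑ a : Fin n, C (E (a + 1) ^ (t : ℕ)) * X a with hL
  have hone : (⟨1 % n, Nat.mod_lt 1 hn⟩ : Fin n) = 1 := by
    ext; simp [Fin.val_one']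
  have key : circ n hn * (Matrix.vandermonde v).map (C : ℂ →+* _) =
      (Matrix.vandermonde v).map (C : ℂ →+* _) * Matrix.diagonal L := by
    apply Matrix.ext; intro i t
    rw [Matrix.mul_apply, Matrix.mul_diagonal]
    have reidx := Fintype.sum_equiv (Equiv.subLeft (i - 1))
      (fun j => circ n hn i j * ((Matrix.vandermonde v).map (C : ℂ →+* _)) j t)
      (fun a => C (v i ^ (t : ℕ)) * (C (E (a + 1) ^ (t : ℕ)) * X a)) ?_
    · rw [reidx, hL, Finset.mul_sum]
      simp [Matrix.vandermonde, Matrix.map_apply]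
    · intro a
      simp only [circ, Matrix.of_apply, Matrix.map_apply, Matrix.vandermonde, hone,
        Equiv.subLeft_apply, hv]
      have h1 : i - a - 1 = i - 1 - a := by open Fin.CommRing in ring
      have h2 : (-a : Fin n) = (i - 1 - a + 1) + -i := by open Fin.CommRing in ring
      rw [h1, h2, E_mul, mul_pow, map_mul]
      ring
  have hdet := congrArg Matrix.det key
  rw [Matrix.det_mul, Matrix.det_mul, Matrix.det_diagonal] at hdet
  have hVd : ((Matrix.vandermonde v).map (C : ℂ →+* MvPolynomial (Fin n) ℂ)).det
      = (C ((Matrix.vandermonde v).det) : MvPolynomial (Fin n) ℂ) := by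
    rw [← RingHom.mapMatrix_apply]
    exact (RingHom.map_det _ _).symm
  have hV0 : (Matrix.vandermonde v).det ≠ 0 := by
    rw [Matrix.det_vandermonde]
    refine Finset.prod_ne_zero_iff.2 fun i _ => Finset.prod_ne_zero_iff.2 fun j hj => ?_
    rw [Finset.mem_Ioi] at hj
    exact sub_ne_zero_of_ne (fun h => (ne_of_gt hj) (v_inj h.symm).symm)
  rw [hVd] at hdet
  have hC0 : (C ((Matrix.vandermonde v).det) : MvPolynomial (Fin n) ℂ) ≠ 0 := by
    simpa using hV0
  have : (circ n hn).det = ∏ t : Fin n, L t := by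
    apply mul_right_cancel₀ hC0
    rw [hdet]; ring
  rw [this, hL]
  refine Finset.prod_congr rfl fun t _ => Finset.sum_congr rfl fun a _ => ?_
  congr 1
  rw [hE, ← pow_mul]
  exact congrArg C (zetaC_pow_congr n hn (by
    have : ((a + 1 : Fin n) : ℕ) % n = ((a : ℕ) + 1) % n := by
      simp [Fin.val_add, Fin.val_one', Nat.add_mod, Nat.mod_mod_of_dvd]
    calc ((a + 1 : Fin n) : ℕ) * (t : ℕ) % n = (((a + 1 : Fin n) : ℕ) % n) * (t : ℕ) % n := by
          rw [Nat.mod_mul_mod]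
      _ = (((a : ℕ) + 1) % n) * (t : ℕ) % n := by rw [this]
      _ = ((a : ℕ) + 1) * (t : ℕ) % n := by rw [Nat.mod_mul_mod]
      _ = (t : ℕ) * ((a : ℕ) + 1) % n := by rw [Nat.mul_comm]))
open MvPolynomial in
lemma det_circ_pow (n k : ℕ) (hn : 0 < n) :
    (circ n hn).det ^ k = ∑ f : Fin (k * n) → Fin n,
      C (∏ j : Fin (k * n), zetaC n ^ ((j : ℕ) * ((f j : ℕ) + 1))) * ∏ j, X (f j) := by
  classical
  set z := zetaC n with hz
  have step1 : (circ n hn).det ^ k = ∏ j : Fin (k * n), ∑ a : Fin n,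
      C (z ^ ((j : ℕ) * ((a : ℕ) + 1))) * X a := by
    rw [← Equiv.prod_comp (finProdFinEquiv (m := k) (n := n))
      (fun j => ∑ a : Fin n, C (z ^ ((j : ℕ) * ((a : ℕ) + 1))) * X a),
      Fintype.prod_prod_type]
    have : ∀ s : Fin k, ∀ t : Fin n,
        (∑ a : Fin n, C (z ^ (((finProdFinEquiv (s, t) : Fin (k*n)) : ℕ) * ((a : ℕ) + 1))) * X a)
        = ∑ a : Fin n, C (z ^ ((t : ℕ) * ((a : ℕ) + 1))) * X a := by
      intro s t
      refine Finset.sum_congr rfl fun a _ => ?_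
      congr 2
      have hval : ((finProdFinEquiv (s, t) : Fin (k*n)) : ℕ) = (t : ℕ) + n * (s : ℕ) := rfl
      rw [hval]
      refine zetaC_pow_congr n hn ?_
      have : ((t : ℕ) + n * (s : ℕ)) * ((a : ℕ) + 1)
          = (t : ℕ) * ((a : ℕ) + 1) + ((s : ℕ) * ((a : ℕ) + 1)) * n := by ring
      rw [this, Nat.add_mul_mod_self_right]
    calc (circ n hn).det ^ k = ∏ _s : Fin k, (circ n hn).det := by
          rw [Finset.prod_const, Finset.card_univ, Fintype.card_fin]
      _ = _ := by
          refine Finset.prod_congr rfl fun s _ => ?_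
          rw [det_circ n hn]
          exact (Finset.prod_congr rfl fun t _ => (this s t).symm)
  rw [step1, Finset.prod_univ_sum]
  rw [Fintype.piFinset_univ]
  refine Finset.sum_congr rfl fun f _ => ?_
  rw [Finset.prod_mul_distrib, map_prod]
lemma zpow_sum_c {ι : Type*} {z : ℂ} (hz : z ≠ 0) (s : Finset ι) (g : ι → ℤ) :
    ∏ i ∈ s, z ^ g i = z ^ (∑ i ∈ s, g i) := by
  classical
  induction s using Finset.cons_induction with
  | empty => simp
  | cons a s ha ih => rw [Finset.prod_cons, Finset.sum_cons, ih, zpow_add₀ hz]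
open Finset in
lemma card_rearrange {N n' : ℕ} (lam f : Fin N → Fin n') (hf : f ∘ Tuple.sort f = lam) :
    (Finset.univ.filter fun σ : Equiv.Perm (Fin N) => lam ∘ σ = f).card
      = ∏ i ∈ Finset.univ.image lam, Nat.factorial ((Finset.univ.filter fun j => lam j = i).card) := by
  classical
  have hfl : lam ∘ ⇑(Tuple.sort f)⁻¹ = f := by
    rw [← hf]; funext j; simp
  have h1 : (univ.filter fun σ : Equiv.Perm (Fin N) => lam ∘ σ = f).card
      = (univ.filter fun ρ : Equiv.Perm (Fin N) => f ∘ ρ = f).card := by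
    refine Finset.card_nbij' (fun σ => Tuple.sort f * σ) (fun ρ => (Tuple.sort f)⁻¹ * ρ)
      ?_ ?_ ?_ ?_
    · intro σ hσ
      rw [Finset.mem_coe, mem_filter] at hσ ⊢
      refine ⟨mem_univ _, ?_⟩
      have : f ∘ ⇑(Tuple.sort f * σ) = (f ∘ ⇑(Tuple.sort f)) ∘ ⇑σ := rfl
      rw [this, hf, hσ.2]
    · intro ρ hρ
      rw [Finset.mem_coe, mem_filter] at hρ ⊢
      refine ⟨mem_univ _, ?_⟩
      have : lam ∘ ⇑((Tuple.sort f)⁻¹ * ρ) = (lam ∘ ⇑(Tuple.sort f)⁻¹) ∘ ⇑ρ := rfl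
      rw [this, hfl, hρ.2]
    · intro σ _; simp [mul_assoc]
    · intro ρ _; simp [mul_assoc]
  have h2 : (univ.filter fun ρ : Equiv.Perm (Fin N) => f ∘ ρ = f).card
      = ∏ i ∈ univ.image f, Nat.factorial ((univ.filter fun j => f j = i).card) := by
    rw [← Fintype.card_subtype, DomMulAct.stabilizer_card' f]
    exact Finset.prod_congr rfl fun i _ => by rw [Fintype.card_subtype]
  have himg : (univ.image f) = univ.image lam := by
    ext i
    simp only [mem_image, mem_univ, true_and]
    constructor
    · rintro ⟨a, rfl⟩; exact ⟨(Tuple.sort f)⁻¹ a, by rw [← hf]; simp⟩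
    · rintro ⟨a, rfl⟩; exact ⟨Tuple.sort f a, by rw [← hf]; simp⟩
  have hfib : ∀ i, (univ.filter fun j => f j = i).card
      = (univ.filter fun j => lam j = i).card := by
    intro i
    refine Finset.card_nbij' (fun j => (Tuple.sort f)⁻¹ j) (fun j => Tuple.sort f j)
      ?_ ?_ ?_ ?_
    · intro j hj
      rw [Finset.mem_coe, mem_filter] at hj ⊢
      exact ⟨mem_univ _, by rw [← hj.2, ← hf]; simp⟩
    · intro j hj
      rw [Finset.mem_coe, mem_filter] at hj ⊢
      exact ⟨mem_univ _, by rw [← hj.2, ← hf]; simp⟩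
    · intro j _; simp
    · intro j _; simp
  rw [h1, h2, himg]
  exact Finset.prod_congr rfl fun i _ => by rw [hfib i]
open Finset in
lemma perm_sum_eq {N n' : ℕ} (lam : Fin N → Fin n') (hlam : Monotone lam)
    (w : (Fin N → Fin n') → ℂ) :
    ∑ σ : Equiv.Perm (Fin N), w (lam ∘ σ)
      = (↑(∏ i ∈ Finset.univ.image lam,
            Nat.factorial ((Finset.univ.filter fun j => lam j = i).card)) : ℂ) *
        ∑ f ∈ Finset.univ.filter
            (fun f : Fin N → Fin n' => f ∘ Tuple.sort f = lam), w f := by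
  classical
  set S : ℕ := ∏ i ∈ Finset.univ.image lam,
      Nat.factorial ((Finset.univ.filter fun j => lam j = i).card) with hS
  rw [← Finset.sum_fiberwise univ (fun σ : Equiv.Perm (Fin N) => lam ∘ ⇑σ)
      (fun σ => w (lam ∘ ⇑σ))]
  have inner : ∀ f : Fin N → Fin n',
      (∑ σ ∈ univ.filter (fun σ : Equiv.Perm (Fin N) => lam ∘ ⇑σ = f), w (lam ∘ ⇑σ))
        = (if f ∘ Tuple.sort f = lam then (S : ℂ) else 0) * w f := by
    intro f
    have : ∀ σ ∈ univ.filter (fun σ : Equiv.Perm (Fin N) => lam ∘ ⇑σ = f),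
        w (lam ∘ ⇑σ) = w f := fun σ hσ => by rw [(mem_filter.1 hσ).2]
    rw [Finset.sum_congr rfl this, Finset.sum_const, nsmul_eq_mul]
    congr 1
    by_cases hf : f ∘ Tuple.sort f = lam
    · rw [if_pos hf, card_rearrange lam f hf]
    · rw [if_neg hf]
      have : (univ.filter fun σ : Equiv.Perm (Fin N) => lam ∘ ⇑σ = f) = ∅ := by
        refine Finset.filter_eq_empty_iff.2 fun σ _ h => hf ?_
        rw [← h, Tuple.comp_perm_comp_sort_eq_comp_sort,
          Tuple.sort_eq_refl_iff_monotone.2 hlam]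
        rfl
      rw [this]; simp
  rw [Finset.sum_congr rfl fun f _ => inner f]
  simp only [ite_mul, zero_mul]
  rw [← Finset.sum_filter, ← Finset.mul_sum]
open Finset in
lemma mval_monotone_eq {n k : ℕ} (hn : 0 < n) (lam : Fin (k * n) → Fin n)
    (hlam : Monotone lam) :
    mval n (k * n) (fun j => ((lam j : ℕ) : ℤ) + 1)
    = ∑ f ∈ Finset.univ.filter
        (fun f : Fin (k * n) → Fin n => f ∘ Tuple.sort f = lam),
        ∏ j : Fin (k * n), zetaC n ^ ((j : ℕ) * ((f j : ℕ) + 1)) := by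
  classical
  unfold mval
  beta_reduce
  have hT : (∑ σ : Equiv.Perm (Fin (k * n)), ∏ j : Fin (k * n),
        zetaC n ^ (((j : ℕ) : ℤ) * (((lam (σ⁻¹ j) : ℕ) : ℤ) + 1)))
      = ∑ σ : Equiv.Perm (Fin (k * n)),
          (fun f : Fin (k * n) → Fin n =>
            ∏ j : Fin (k * n), zetaC n ^ ((j : ℕ) * ((f j : ℕ) + 1))) (lam ∘ ⇑σ) := by
    refine Fintype.sum_equiv (Equiv.inv (Equiv.Perm (Fin (k * n)))) _ _ fun σ => ?_
    simp only [Equiv.inv_apply, Function.comp_apply]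
    refine Finset.prod_congr rfl fun j _ => ?_
    rw [← zpow_natCast]
    push_cast
    ring_nf
  rw [hT, perm_sum_eq lam hlam
    (fun f => ∏ j : Fin (k * n), zetaC n ^ ((j : ℕ) * ((f j : ℕ) + 1)))]
  have hc : (∏ i ∈ Finset.univ.image (fun j => ((lam j : ℕ) : ℤ) + 1),
        ((Nat.factorial ((Finset.univ.filter
          fun j => ((lam j : ℕ) : ℤ) + 1 = i).card) : ℂ)))
      = (↑(∏ i ∈ Finset.univ.image lam,
            Nat.factorial ((Finset.univ.filter fun j => lam j = i).card)) : ℂ) := by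
    have hinj : Function.Injective (fun a : Fin n => ((a : ℕ) : ℤ) + 1) := by
      intro a b h
      simp only [add_left_inj, Int.natCast_inj] at h
      exact Fin.ext h
    have himg : Finset.univ.image (fun j => ((lam j : ℕ) : ℤ) + 1) =
        (Finset.univ.image lam).image (fun a : Fin n => ((a : ℕ) : ℤ) + 1) := by
      rw [Finset.image_image]; rfl
    rw [himg, Finset.prod_image (fun a _ b _ h => hinj h)]
    push_cast
    refine Finset.prod_congr rfl fun i _ => ?_
    have hfe : (Finset.univ.filter fun j => ((lam j : ℕ) : ℤ) + 1 = ((i : ℕ) : ℤ) + 1)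
        = Finset.univ.filter fun j => lam j = i := by
      refine Finset.filter_congr fun j _ => ?_
      constructor
      · intro h; exact hinj h
      · intro h; rw [h]
    rw [hfe]
  have hc0 : (↑(∏ i ∈ Finset.univ.image lam,
        Nat.factorial ((Finset.univ.filter fun j => lam j = i).card)) : ℂ) ≠ 0 := by
    push_cast
    refine Finset.prod_ne_zero_iff.2 fun i _ => ?_
    exact_mod_cast Nat.cast_ne_zero.2 (Nat.factorial_ne_zero _)
  rw [hc, ← mul_assoc, inv_mul_cancel₀ hc0, one_mul]
open Finset in
lemma mval_zero {n k : ℕ} (hn : 0 < n) (hk : 0 < k) (lam : Fin (k * n) → Fin n)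
    (hdvd : ¬ (n : ℤ) ∣ ∑ j : Fin (k * n), (((lam j : ℕ) : ℤ) + 1)) :
    mval n (k * n) (fun j => ((lam j : ℕ) : ℤ) + 1) = 0 := by
  classical
  have hN : 0 < k * n := Nat.mul_pos hk hn
  have hNZ : NeZero (k * n) := ⟨hN.ne'⟩
  have hz0 : zetaC n ≠ 0 := zetaC_ne_zero n
  set D : ℤ := ∑ j : Fin (k * n), (((lam j : ℕ) : ℤ) + 1) with hD
  set F : Equiv.Perm (Fin (k * n)) → ℂ := fun σ =>
    ∏ j : Fin (k * n), zetaC n ^ (((j : ℕ) : ℤ) * (((lam (σ⁻¹ j) : ℕ) : ℤ) + 1)) with hF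
  suffices hT0 : (∑ σ : Equiv.Perm (Fin (k * n)), F σ) = 0 by
    unfold mval
    beta_reduce
    rw [show (∑ σ : Equiv.Perm (Fin (k * n)), ∏ j : Fin (k * n),
        zetaC n ^ (((j : ℕ) : ℤ) * (((lam (σ⁻¹ j) : ℕ) : ℤ) + 1))) = 0 from hT0, mul_zero]
  set cyc : Equiv.Perm (Fin (k * n)) := Equiv.addLeft (1 : Fin (k * n)) with hcyc
  have key : ∀ σ : Equiv.Perm (Fin (k * n)), F (cyc * σ) = zetaC n ^ D * F σ := by
    intro σ
    have hinv : ∀ x : Fin (k * n),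
        (cyc * σ)⁻¹ ((Equiv.addLeft (1 : Fin (k * n))) x) = σ⁻¹ x := by
      intro x
      show (cyc * σ)⁻¹ (1 + x) = σ⁻¹ x
      have : (cyc * σ)⁻¹ = σ⁻¹ * cyc⁻¹ := mul_inv_rev cyc σ
      rw [this, Equiv.Perm.mul_apply]
      congr 1
      have : cyc⁻¹ (1 + x) = -1 + (1 + x) := rfl
      rw [this]
      abel
    have step1 : F (cyc * σ) = ∏ x : Fin (k * n),
        zetaC n ^ ((((1 + x : Fin (k * n)) : ℕ) : ℤ) * (((lam (σ⁻¹ x) : ℕ) : ℤ) + 1)) := by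
      rw [hF]
      refine (Fintype.prod_equiv (Equiv.addLeft (1 : Fin (k * n)))
        (fun x => zetaC n ^ ((((1 + x : Fin (k * n)) : ℕ) : ℤ) *
            (((lam (σ⁻¹ x) : ℕ) : ℤ) + 1)))
        (fun j => zetaC n ^ (((j : ℕ) : ℤ) *
            (((lam ((cyc * σ)⁻¹ j) : ℕ) : ℤ) + 1))) (fun x => ?_)).symm
      beta_reduce
      rw [hinv x]
      rfl
    have hdiv : ∀ x : Fin (k * n), ∀ c : ℤ,
        zetaC n ^ ((((1 + x : Fin (k * n)) : ℕ) : ℤ) * c)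
          = zetaC n ^ ((((x : ℕ) : ℤ) + 1) * c) := by
      intro x c
      refine zetaC_zpow_congr n hn ?_
      have hmodN : (((1 + x : Fin (k * n)) : ℕ)) % n = (1 + (x : ℕ)) % n := by
        have h1 : ((1 + x : Fin (k * n)) : ℕ) = (((1 : Fin (k * n)) : ℕ) + (x : ℕ)) % (k * n) :=
          Fin.val_add _ _
        have hdvdn : n ∣ k * n := dvd_mul_left n k
        rw [h1, Nat.mod_mod_of_dvd _ hdvdn, Fin.val_one', Nat.add_mod,
          Nat.mod_mod_of_dvd _ hdvdn, ← Nat.add_mod]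
      have hZ : (((1 + x : Fin (k * n)) : ℕ) : ℤ) % n = ((1 + (x : ℕ) : ℕ) : ℤ) % n := by
        have := congrArg (fun m : ℕ => (m : ℤ)) hmodN
        push_cast at this
        exact_mod_cast this
      have hsub : (n : ℤ) ∣ ((((1 + x : Fin (k * n)) : ℕ) : ℤ) - (((x : ℕ) : ℤ) + 1)) := by
        have h2 : ((1 + (x : ℕ) : ℕ) : ℤ) = ((x : ℕ) : ℤ) + 1 := by push_cast; ring
        refine Int.ModEq.dvd ?_
        unfold Int.ModEq
        rw [← h2, hZ.symm]
      have : (((1 + x : Fin (k * n)) : ℕ) : ℤ) * c - ((((x : ℕ) : ℤ) + 1)) * c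
          = ((((1 + x : Fin (k * n)) : ℕ) : ℤ) - (((x : ℕ) : ℤ) + 1)) * c := by ring
      rw [this]
      exact Dvd.dvd.mul_right hsub c
    rw [step1, Finset.prod_congr rfl fun x _ => hdiv x _]
    have expand : ∀ x : Fin (k * n),
        zetaC n ^ ((((x : ℕ) : ℤ) + 1) * (((lam (σ⁻¹ x) : ℕ) : ℤ) + 1))
        = zetaC n ^ (((x : ℕ) : ℤ) * (((lam (σ⁻¹ x) : ℕ) : ℤ) + 1)) *
          zetaC n ^ ((((lam (σ⁻¹ x) : ℕ) : ℤ) + 1)) := by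
      intro x
      rw [← zpow_add₀ hz0]
      congr 1
      ring
    rw [Finset.prod_congr rfl fun x _ => expand x, Finset.prod_mul_distrib, hF]
    simp only [zpow_sum_c hz0]
    have hsum : (∑ x : Fin (k * n), (((lam (σ⁻¹ x) : ℕ) : ℤ) + 1)) = D := by
      rw [hD]
      exact Equiv.sum_comp σ⁻¹ (fun j => (((lam j : ℕ) : ℤ) + 1))
    rw [hsum]
    ring
  have hshift : (∑ σ : Equiv.Perm (Fin (k * n)), F σ)
      = ∑ σ : Equiv.Perm (Fin (k * n)), F (cyc * σ) :=
    (Fintype.sum_equiv (Equiv.mulLeft cyc) (fun σ => F (cyc * σ)) F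
      (fun σ => rfl)).symm
  have heq : (∑ σ : Equiv.Perm (Fin (k * n)), F σ)
      = zetaC n ^ D * ∑ σ : Equiv.Perm (Fin (k * n)), F σ := by
    conv_lhs => rw [hshift]
    rw [Finset.sum_congr rfl fun σ _ => key σ, ← Finset.mul_sum]
  have hzD : zetaC n ^ D ≠ 1 := by
    intro h
    exact hdvd (((zetaC_prim n hn).zpow_eq_one_iff_dvd D).mp h)
  have : (zetaC n ^ D - 1) * (∑ σ : Equiv.Perm (Fin (k * n)), F σ) = 0 := by
    rw [sub_mul, one_mul, ← heq, sub_self]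
  rcases mul_eq_zero.mp this with h | h
  · exact absurd (by linear_combination h) hzD
  · exact h

open MvPolynomial in
open scoped Classical in
/-- `Θ(ℤ/nℤ)^k = Σ_{λ ∈ Λ_n^k} m_λ(ζ_{(n,k)}) x_{λ₁}⋯x_{λ_{kn}}`, and the
sum may be restricted to the `λ` with `n ∣ |λ|`.  A `λ ∈ Λ_n^k` is encoded as a
monotone `lam : Fin (kn) → Fin n` with `λ_j = lam j + 1`, so `x_{λ_j} = X (lam j)`. -/
theorem stmt_13 (n k : ℕ) (hn : 0 < n) (hk : 0 < k) :
    ((circ n hn).det ^ k =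
      ∑ lam : Fin (k * n) → Fin n,
        if Monotone lam then
          C (mval n (k * n) (fun j => ((lam j : ℕ) : ℤ) + 1)) * ∏ j, X (lam j)
        else 0) ∧
    ((circ n hn).det ^ k =
      ∑ lam : Fin (k * n) → Fin n,
        if Monotone lam ∧ (n : ℤ) ∣ ∑ j, (((lam j : ℕ) : ℤ) + 1) then
          C (mval n (k * n) (fun j => ((lam j : ℕ) : ℤ) + 1)) * ∏ j, X (lam j)
        else 0) := by
  classical
  have main : (circ n hn).det ^ k =
      ∑ lam : Fin (k * n) → Fin n,
        if Monotone lam then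
          C (mval n (k * n) (fun j => ((lam j : ℕ) : ℤ) + 1)) * ∏ j, X (lam j)
        else 0 := by
    rw [det_circ_pow n k hn]
    rw [← Finset.sum_fiberwise Finset.univ
      (fun f : Fin (k * n) → Fin n => f ∘ Tuple.sort f)
      (fun f => C (∏ j : Fin (k * n), zetaC n ^ ((j : ℕ) * ((f j : ℕ) + 1)))
        * ∏ j, X (f j))]
    refine Finset.sum_congr rfl fun lam _ => ?_
    by_cases hm : Monotone lam
    · rw [if_pos hm]
      have hXf : ∀ f ∈ Finset.univ.filter
          (fun f : Fin (k * n) → Fin n => f ∘ Tuple.sort f = lam),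
          (∏ j, (X (f j) : MvPolynomial (Fin n) ℂ)) = ∏ j, X (lam j) := by
        intro f hf
        have hf' := (Finset.mem_filter.1 hf).2
        rw [← hf']
        exact (Equiv.prod_comp (Tuple.sort f) (fun j => (X (f j) : MvPolynomial (Fin n) ℂ))).symm
      calc (∑ f ∈ Finset.univ.filter
              (fun f : Fin (k * n) → Fin n => f ∘ Tuple.sort f = lam),
            C (∏ j : Fin (k * n), zetaC n ^ ((j : ℕ) * ((f j : ℕ) + 1))) * ∏ j, X (f j))
          = ∑ f ∈ Finset.univ.filter
              (fun f : Fin (k * n) → Fin n => f ∘ Tuple.sort f = lam),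
            C (∏ j : Fin (k * n), zetaC n ^ ((j : ℕ) * ((f j : ℕ) + 1))) * ∏ j, X (lam j) :=
            Finset.sum_congr rfl fun f hf => by rw [hXf f hf]
        _ = (∑ f ∈ Finset.univ.filter
              (fun f : Fin (k * n) → Fin n => f ∘ Tuple.sort f = lam),
            C (∏ j : Fin (k * n), zetaC n ^ ((j : ℕ) * ((f j : ℕ) + 1)))) * ∏ j, X (lam j) :=
            (Finset.sum_mul _ _ _).symm
        _ = _ := by
            rw [← map_sum, ← mval_monotone_eq hn lam hm]
    · rw [if_neg hm]
      have : (Finset.univ.filter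
          (fun f : Fin (k * n) → Fin n => f ∘ Tuple.sort f = lam)) = ∅ := by
        refine Finset.filter_eq_empty_iff.2 fun f _ h => hm ?_
        rw [← h]
        exact Tuple.monotone_sort f
      rw [this, Finset.sum_empty]
  refine ⟨main, ?_⟩
  rw [main]
  refine Finset.sum_congr rfl fun lam _ => ?_
  by_cases hm : Monotone lam
  · by_cases hd : (n : ℤ) ∣ ∑ j : Fin (k * n), (((lam j : ℕ) : ℤ) + 1)
    · rw [if_pos hm, if_pos ⟨hm, hd⟩]
    · rw [if_pos hm, if_neg (fun h => hd h.2), mval_zero hn hk lam hd, map_zero, zero_mul]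
  · rw [if_neg hm, if_neg (fun h => hm h.1)]
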